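/- Every infinite non-cyclic group has infinitely many non-power subgroups. -/

import Mathlib

/-- `G^m`: the subgroup generated by all `m`-th powers of elements of `G`. -/
def powerSubgroup (G : Type*) [Group G] (m : ℕ) : Subgroup G :=
  Subgroup.closure (Set.range fun g : G => g ^ m)

/-!
Suppose an infinite group `G` has only finitely many non-power subgroups. A subgroup containing
`G^m` (`m ≠ 0`) is then either one of them or `G^m ⊔ G^k = G^(gcd m k)`, so `G ⧸ G^m` has only
finitely many subgroups and `G^m` has finite index. Hence every nontrivial finite subgroup is a
non-power subgroup: `G` has only finitely many elements of finite order, and some `u` of infinite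
order.

Of an injective family of subgroups, all but finitely many are power subgroups. For `t` of finite
order `q` commuting with `u`, take `⟨t u^M⟩ = G^a`; then `G^(aq) ≤ ⟨(t u^M)^q⟩ ≤ ⟨u⟩`, and some
`⟨t u^(aM)⟩ = G^b` has `aq ∣ b`, so `t ∈ ⟨u⟩` and `t = 1`. Every element of finite order commutes
with a power of `u`, so `G` is torsion-free. Finally some `⟨k⟩ = G^a` with `k ≠ 1`; this normal
subgroup is central because each `x` fixes `x^a ∈ ⟨k⟩`. So the center has finite index, the
transfer `G → Z(G)`, `g ↦ g^[G : Z(G)]`, is injective and `G` is abelian, and `g ↦ g^a` embeds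
`G` into `⟨k⟩`.
-/

open Subgroup Filter Function

def nonpowerSubgroups (G : Type*) [Group G] : Set (Subgroup G) :=
  {H | ∀ m : ℕ, H ≠ powerSubgroup G m}

section

variable {G : Type*} [Group G]

theorem powerSubgroup_le_iff {m : ℕ} {H : Subgroup G} :
    powerSubgroup G m ≤ H ↔ ∀ g : G, g ^ m ∈ H :=
  (closure_le H).trans Set.range_subset_iff

theorem pow_mem_powerSubgroup (m : ℕ) (g : G) : g ^ m ∈ powerSubgroup G m :=
  powerSubgroup_le_iff.mp le_rfl g

theorem powerSubgroup_zero : powerSubgroup G 0 = ⊥ :=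
  le_bot_iff.mp (powerSubgroup_le_iff.mpr fun g => by simp)

theorem powerSubgroup_le_of_dvd {d m : ℕ} (h : d ∣ m) :
    powerSubgroup G m ≤ powerSubgroup G d := by
  obtain ⟨k, rfl⟩ := h
  exact powerSubgroup_le_iff.mpr fun g => pow_mul g d k ▸ pow_mem (pow_mem_powerSubgroup d g) k

theorem powerSubgroup_sup (a b : ℕ) :
    powerSubgroup G a ⊔ powerSubgroup G b = powerSubgroup G (a.gcd b) := by
  refine le_antisymm (sup_le (powerSubgroup_le_of_dvd (a.gcd_dvd_left b))
    (powerSubgroup_le_of_dvd (a.gcd_dvd_right b))) (powerSubgroup_le_iff.mpr fun g => ?_)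
  have bezout : g ^ a.gcd b = (g ^ a) ^ a.gcdA b * (g ^ b) ^ a.gcdB b := by
    rw [← zpow_natCast, Nat.gcd_eq_gcd_ab, zpow_add, zpow_mul, zpow_mul, zpow_natCast,
      zpow_natCast]
  rw [bezout]
  exact mul_mem (zpow_mem (mem_sup_left (pow_mem_powerSubgroup a g)) _)
    (zpow_mem (mem_sup_right (pow_mem_powerSubgroup b g)) _)

instance powerSubgroup_characteristic (m : ℕ) : (powerSubgroup G m).Characteristic :=
  characteristic_iff_le_comap.mpr fun ϕ => powerSubgroup_le_iff.mpr fun g => by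
    show ϕ (g ^ m) ∈ powerSubgroup G m
    exact map_pow ϕ g m ▸ pow_mem_powerSubgroup m (ϕ g)

theorem powerSubgroup_mul_le_zpowers_pow {a : ℕ} {x : G} (h : powerSubgroup G a = zpowers x)
    (q : ℕ) : powerSubgroup G (a * q) ≤ zpowers (x ^ q) := by
  refine powerSubgroup_le_iff.mpr fun g => ?_
  obtain ⟨k, hk⟩ := mem_zpowers_iff.mp (h ▸ pow_mem_powerSubgroup a g)
  refine mem_zpowers_iff.mpr ⟨k, ?_⟩
  rw [pow_mul, ← hk, ← zpow_natCast, ← zpow_natCast, ← zpow_mul, ← zpow_mul, mul_comm]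

section CommutingPair

variable {t u : G}

theorem eq_one_of_mem_zpowers (ht : IsOfFinOrder t) (hu : ¬IsOfFinOrder u)
    (h : t ∈ zpowers u) : t = 1 := by
  obtain ⟨β, rfl⟩ := mem_zpowers_iff.mp h
  obtain ⟨n, hn, hβn⟩ := isOfFinOrder_iff_pow_eq_one.mp ht
  have : u ^ (β * n) = u ^ (0 : ℤ) := by rw [zpow_mul, zpow_natCast, hβn, zpow_zero]
  have hβ : β = 0 := by
    simpa [hn.ne'] using injective_zpow_iff_not_isOfFinOrder.mpr hu this
  rw [hβ, zpow_zero]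

theorem exists_of_mul_zpow_mem_zpowers (ht : IsOfFinOrder t) (hu : ¬IsOfFinOrder u)
    (htu : Commute t u) {j : ℕ} {α β : ℤ} (h : t ^ α * u ^ β ∈ zpowers (t * u ^ j)) :
    ∃ k : ℤ, t ^ α = t ^ k ∧ β = j * k := by
  obtain ⟨k, hk⟩ := mem_zpowers_iff.mp h
  rw [(htu.pow_right j).mul_zpow, ← zpow_natCast, ← zpow_mul] at hk
  have key : t ^ (k - α) = u ^ (β - j * k) := by
    calc t ^ (k - α) = t ^ (-α) * (t ^ k * u ^ (j * k : ℤ)) * u ^ (-(j * k : ℤ)) := by group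
      _ = u ^ (β - j * k) := by rw [hk]; group
  have htk : t ^ (k - α) = 1 := eq_one_of_mem_zpowers ht.zpow hu ⟨_, key.symm⟩
  refine ⟨k, ?_, ?_⟩
  · rw [zpow_sub, mul_inv_eq_one] at htk
    exact htk.symm
  · have := injective_zpow_iff_not_isOfFinOrder.mpr hu
      ((key.symm.trans htk).trans (zpow_zero u).symm)
    linarith

theorem dvd_of_zpowers_mul_pow_le (ht : IsOfFinOrder t) (hu : ¬IsOfFinOrder u)
    (htu : Commute t u) {i j : ℕ} (h : zpowers (t * u ^ i) ≤ zpowers (t * u ^ j)) : j ∣ i := by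
  have hmem : t ^ (1 : ℤ) * u ^ (i : ℤ) ∈ zpowers (t * u ^ j) := by
    simpa only [zpow_one, zpow_natCast] using h (mem_zpowers _)
  obtain ⟨k, -, hk⟩ := exists_of_mul_zpow_mem_zpowers ht hu htu hmem
  exact Int.natCast_dvd_natCast.mp ⟨k, hk⟩

theorem zpowers_mul_pow_injective (ht : IsOfFinOrder t) (hu : ¬IsOfFinOrder u)
    (htu : Commute t u) : Injective fun j : ℕ => zpowers (t * u ^ j) := fun _ _ h =>
  Nat.dvd_antisymm (dvd_of_zpowers_mul_pow_le ht hu htu h.ge)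
    (dvd_of_zpowers_mul_pow_le ht hu htu h.le)

theorem zpowers_pow_injective (hu : ¬IsOfFinOrder u) :
    Injective fun j : ℕ => zpowers (u ^ j) := by
  simpa only [one_mul] using zpowers_mul_pow_injective IsOfFinOrder.one hu (Commute.one_left u)

theorem mul_orderOf_dvd_of_pow_mem_zpowers (ht : IsOfFinOrder t) (hu : ¬IsOfFinOrder u)
    (htu : Commute t u) {j b : ℕ} (h : u ^ b ∈ zpowers (t * u ^ j)) : j * orderOf t ∣ b := by
  have hmem : t ^ (0 : ℤ) * u ^ (b : ℤ) ∈ zpowers (t * u ^ j) := by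
    simpa only [zpow_zero, one_mul, zpow_natCast] using h
  obtain ⟨k, hk1, hk⟩ := exists_of_mul_zpow_mem_zpowers ht hu htu hmem
  obtain ⟨l, rfl⟩ := orderOf_dvd_iff_zpow_eq_one.mpr (hk1.symm.trans (zpow_zero t))
  exact Int.natCast_dvd_natCast.mp ⟨l, by push_cast; rw [hk]; ring⟩

end CommutingPair

theorem finite_of_finite_subgroup [Finite (Subgroup G)] : Finite G := by
  have htor (g : G) : IsOfFinOrder g := by
    by_contra hg
    have := Infinite.of_injective _ (zpowers_pow_injective hg)
    exact not_finite (Subgroup G)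
  have hcover : (Set.univ : Set G) ⊆ ⋃ H ∈ Set.range (zpowers (G := G)), (H : Set G) :=
    fun g _ => Set.mem_biUnion ⟨g, rfl⟩ (mem_zpowers g)
  refine Set.finite_univ_iff.mp (((Set.toFinite _).biUnion ?_).subset hcover)
  rintro _ ⟨g, rfl⟩
  exact finite_zpowers.mpr (htor g)

theorem exists_pos_commute_pow {t : G} (hT : {x : G | IsOfFinOrder x}.Finite)
    (ht : IsOfFinOrder t) (u : G) : ∃ n, 0 < n ∧ Commute t (u ^ n) := by
  obtain ⟨i, j, hij, h⟩ := hT.exists_lt_map_eq_of_forall_mem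
    (f := fun n : ℕ => MulAut.conj (u ^ n) t)
    fun n => (MulAut.conj (u ^ n)).toMonoidHom.isOfFinOrder ht
  obtain ⟨n, rfl⟩ := Nat.exists_eq_add_of_lt hij
  refine ⟨n + 1, n.succ_pos, ?_⟩
  rw [add_assoc, pow_add, map_mul, MulAut.mul_apply] at h
  have := (MulAut.conj (u ^ i)).injective h
  rw [MulAut.conj_apply] at this
  exact eq_mul_inv_iff_mul_eq.mp this

section FiniteNonpower

variable (hN : (nonpowerSubgroups G).Finite)
include hN

theorem finite_setOf_powerSubgroup_le {m : ℕ} (hm : m ≠ 0) :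
    {H : Subgroup G | powerSubgroup G m ≤ H}.Finite := by
  refine (hN.union (m.divisors.finite_toSet.image (powerSubgroup G))).subset ?_
  intro H (hH : powerSubgroup G m ≤ H)
  by_cases hpow : H ∈ nonpowerSubgroups G
  · exact Or.inl hpow
  · obtain ⟨k, rfl⟩ : ∃ k, H = powerSubgroup G k := by simpa [nonpowerSubgroups] using hpow
    refine Or.inr ⟨k.gcd m, Nat.mem_divisors.mpr ⟨k.gcd_dvd_right m, hm⟩, ?_⟩
    rw [← powerSubgroup_sup, sup_eq_left.mpr hH]

theorem powerSubgroup_finiteIndex {m : ℕ} (hm : m ≠ 0) : (powerSubgroup G m).FiniteIndex := by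
  have : Finite {H : Subgroup G // powerSubgroup G m ≤ H} :=
    (finite_setOf_powerSubgroup_le hN hm).to_subtype
  have : Finite (Subgroup (G ⧸ powerSubgroup G m)) :=
    Finite.of_equiv _ (QuotientGroup.comapMk'OrderIso (powerSubgroup G m)).symm.toEquiv
  have := finite_of_finite_subgroup (G := G ⧸ powerSubgroup G m)
  exact finiteIndex_of_finite_quotient

theorem mem_nonpowerSubgroups_of_finite [Infinite G] {H : Subgroup G} (hH : H ≠ ⊥)
    (hfin : (H : Set G).Finite) : H ∈ nonpowerSubgroups G := by
  rintro m rfl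
  rcases eq_or_ne m 0 with rfl | hm
  · exact hH powerSubgroup_zero
  · have := hfin.to_subtype
    have : Finite G := (finite_iff_finite_and_finiteIndex _).mpr
      ⟨this, powerSubgroup_finiteIndex hN hm⟩
    exact not_finite G

theorem finite_setOf_isOfFinOrder [Infinite G] : {x : G | IsOfFinOrder x}.Finite := by
  have hcover : {x : G | IsOfFinOrder x} ⊆
      insert 1 (⋃ H ∈ {H ∈ nonpowerSubgroups G | (H : Set G).Finite}, (H : Set G)) := by
    intro x (hx : IsOfFinOrder x)
    rcases eq_or_ne x 1 with rfl | hx1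
    · exact Set.mem_insert _ _
    · have hfin := finite_zpowers.mpr hx
      refine Set.mem_insert_of_mem _ (Set.mem_biUnion ⟨?_, hfin⟩ (mem_zpowers x))
      exact mem_nonpowerSubgroups_of_finite hN (zpowers_eq_bot.not.mpr hx1) hfin
  exact (((hN.subset (Set.sep_subset _ _)).biUnion fun H hH => hH.2).insert 1).subset hcover

theorem exists_not_isOfFinOrder [Infinite G] : ∃ u : G, ¬IsOfFinOrder u := by
  by_contra! h
  exact Set.infinite_univ ((finite_setOf_isOfFinOrder hN).subset fun x _ => h x)

theorem eventually_exists_eq_powerSubgroup {S : ℕ → Subgroup G} (hS : Injective S) :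
    ∀ᶠ j in atTop, ∃ m, S j = powerSubgroup G m := by
  rw [← Nat.cofinite_eq_atTop]
  filter_upwards [(hN.preimage hS.injOn).eventually_cofinite_notMem] with j hj
  simpa [nonpowerSubgroups] using hj

theorem eq_one_of_commute {t u : G} (ht : IsOfFinOrder t) (hu : ¬IsOfFinOrder u)
    (htu : Commute t u) : t = 1 := by
  obtain ⟨M, hM⟩ := eventually_atTop.mp
    (eventually_exists_eq_powerSubgroup hN (zpowers_mul_pow_injective ht hu htu))
  obtain ⟨a, ha⟩ : ∃ a, zpowers (t * u ^ M) = powerSubgroup G a := hM M le_rfl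
  refine eq_one_of_mem_zpowers ht hu ?_
  rcases eq_or_ne a 0 with rfl | ha0
  · rw [powerSubgroup_zero, zpowers_eq_bot] at ha
    exact eq_inv_of_mul_eq_one_left ha ▸ inv_mem (pow_mem (mem_zpowers u) M)
  obtain ⟨b, hb⟩ : ∃ b, zpowers (t * u ^ (a * M)) = powerSubgroup G b :=
    hM (a * M) (Nat.le_mul_of_pos_left M (Nat.pos_of_ne_zero ha0))
  have hab : a * orderOf t ∣ b := (mul_dvd_mul_right (dvd_mul_right a M) _).trans
    (mul_orderOf_dvd_of_pow_mem_zpowers ht hu htu (hb ▸ pow_mem_powerSubgroup b u))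
  have hq : (t * u ^ M) ^ orderOf t ∈ zpowers u := by
    rw [(htu.pow_right M).mul_pow, pow_orderOf_eq_one, one_mul]
    exact pow_mem (pow_mem (mem_zpowers u) M) _
  have hle : powerSubgroup G b ≤ zpowers u := (powerSubgroup_le_of_dvd hab).trans
    ((powerSubgroup_mul_le_zpowers_pow ha.symm _).trans (zpowers_le.mpr hq))
  have := mul_mem (hle (hb ▸ mem_zpowers _)) (inv_mem (pow_mem (mem_zpowers u) (a * M)))
  rwa [mul_inv_cancel_right] at this

theorem eq_one_of_isOfFinOrder [Infinite G] {t : G} (ht : IsOfFinOrder t) : t = 1 := by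
  obtain ⟨u, hu⟩ := exists_not_isOfFinOrder hN
  obtain ⟨n, hn, htu⟩ := exists_pos_commute_pow (finite_setOf_isOfFinOrder hN) ht u
  exact eq_one_of_commute hN ht (fun h => hu (h.of_pow hn.ne')) htu

theorem exists_zpowers_eq_powerSubgroup [Infinite G] :
    ∃ k : G, k ≠ 1 ∧ ∃ a ≠ 0, zpowers k = powerSubgroup G a := by
  obtain ⟨u, hu⟩ := exists_not_isOfFinOrder hN
  obtain ⟨j, ⟨a, ha⟩, hj⟩ :=
    ((eventually_exists_eq_powerSubgroup hN (zpowers_pow_injective hu)).and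
      (eventually_gt_atTop 0)).exists
  have hk : u ^ j ≠ 1 := fun h => hu (isOfFinOrder_iff_pow_eq_one.mpr ⟨j, hj, h⟩)
  refine ⟨u ^ j, hk, a, ?_, ha⟩
  rintro rfl
  exact hk (zpowers_eq_bot.mp (ha.trans powerSubgroup_zero))

end FiniteNonpower

section TorsionFree

variable (htf : ∀ x : G, IsOfFinOrder x → x = 1)
include htf

theorem eq_one_of_pow_eq_one {x : G} {n : ℕ} (hn : n ≠ 0) (h : x ^ n = 1) : x = 1 :=
  htf x (isOfFinOrder_iff_pow_eq_one.mpr ⟨n, Nat.pos_of_ne_zero hn, h⟩)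

theorem mem_center_of_zpowers_eq_powerSubgroup {k : G} (hk : k ≠ 1) {a : ℕ} (ha : a ≠ 0)
    (h : zpowers k = powerSubgroup G a) : k ∈ center G := by
  have hinj := injective_zpow_iff_not_isOfFinOrder.mpr fun hfin => hk (htf k hfin)
  refine mem_center_iff.mpr fun x => ?_
  obtain ⟨s, hs⟩ := mem_zpowers_iff.mp (h ▸ pow_mem_powerSubgroup a x)
  rcases eq_or_ne s 0 with rfl | hs0
  · obtain rfl : x = 1 := eq_one_of_pow_eq_one htf ha (hs.symm.trans (zpow_zero k))
    simp
  obtain ⟨e, he⟩ := mem_zpowers_iff.mp (h ▸ (powerSubgroup G a).normal_of_characteristic.conj_mem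
    k (h ▸ mem_zpowers k) x)
  -- conjugation by `x` fixes `x ^ a = k ^ s`, hence fixes `k`
  have hes : k ^ (e * s) = k ^ s := by
    rw [zpow_mul, he, conj_zpow, hs, (Commute.self_pow x a).eq, mul_inv_cancel_right]
  have he1 : e = 1 := mul_right_cancel₀ hs0 ((hinj hes).trans (one_mul s).symm)
  rw [he1, zpow_one] at he
  exact (eq_mul_inv_iff_mul_eq.mp he).symm

theorem commute_of_finiteIndex_center [(center G).FiniteIndex] (x y : G) : Commute x y := by
  have hinj : Injective (MonoidHom.transferCenterPow G) := (injective_iff_map_eq_one _).mpr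
    fun g hg => eq_one_of_pow_eq_one htf FiniteIndex.index_ne_zero
      (by simpa using congrArg Subtype.val hg)
  exact hinj (by rw [map_mul, map_mul, mul_comm'])

theorem isCyclic_of_powerSubgroup_eq_zpowers (hcomm : ∀ x y : G, Commute x y) {a : ℕ}
    (ha : a ≠ 0) {k : G} (h : powerSubgroup G a = zpowers k) : IsCyclic G := by
  let f : G →* zpowers k :=
    { toFun := fun x => ⟨x ^ a, h ▸ pow_mem_powerSubgroup a x⟩
      map_one' := Subtype.ext (one_pow a)
      map_mul' := fun x y => Subtype.ext ((hcomm x y).mul_pow a) }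
  exact isCyclic_of_injective f ((injective_iff_map_eq_one f).mpr fun x hx =>
    eq_one_of_pow_eq_one htf ha (congrArg Subtype.val hx))

end TorsionFree

end

theorem infinite_noncyclic_has_infinitely_many_nonpower {G : Type*} [Group G]
    [Infinite G] (h : ¬IsCyclic G) :
    {H : Subgroup G | ∀ m : ℕ, H ≠ powerSubgroup G m}.Infinite := by
  by_contra hfin
  have hN : (nonpowerSubgroups G).Finite := Set.not_infinite.mp hfin
  have htf (x : G) : IsOfFinOrder x → x = 1 := eq_one_of_isOfFinOrder hN
  obtain ⟨k, hk, a, ha, hka⟩ := exists_zpowers_eq_powerSubgroup hN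
  have : (zpowers k).FiniteIndex := hka ▸ powerSubgroup_finiteIndex hN ha
  have : (center G).FiniteIndex :=
    finiteIndex_of_le (zpowers_le.mpr (mem_center_of_zpowers_eq_powerSubgroup htf hk ha hka))
  exact h (isCyclic_of_powerSubgroup_eq_zpowers htf (commute_of_finiteIndex_center htf) ha
    hka.symm)
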